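/- arXiv:2102.07489 — 3 statements merged into one kernel-verified Lean document; each statement's English description precedes it below -/
import Mathlib

section
/- Let X₁ be a Rademacher random variable and X₂ an exponential random variable with rate 1, independent of X₁. Let X̂ = (X₁ + X₂)/√2, F_X̂ the cumulative distribution function of X̂, and Ŷ = F_X̂(X̂). Then cov(X₁, Ŷ) = (1 − e^{−2})/4. -/
open MeasureTheory ProbabilityTheory
open scoped NNReal ENNReal

/-- `G` is the cumulative distribution function of the exponential distribution with
rate 1: `G(z) = 1 - exp(-z)` for `z ≥ 0` and `G(z) = 0` for `z < 0`. -/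
noncomputable def G (z : ℝ) : ℝ := if 0 ≤ z then 1 - Real.exp (-z) else 0

open Set Real

lemma G_meas : Measurable G :=
  Measurable.ite measurableSet_Ici
    (measurable_const.sub (Real.measurable_exp.comp measurable_neg)) measurable_const

lemma G_nonneg (z : ℝ) : 0 ≤ G z := by
  unfold G; split_ifs with h
  · have := Real.exp_le_one_iff.mpr (neg_nonpos.mpr h); linarith
  · exact le_rfl

lemma G_le_one (z : ℝ) : G z ≤ 1 := by
  unfold G; split_ifs with h
  · have := Real.exp_pos (-z); linarith
  · norm_num

lemma G_of_nonneg {z : ℝ} (h : 0 ≤ z) : G z = 1 - Real.exp (-z) := if_pos h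
lemma G_of_neg {z : ℝ} (h : z < 0) : G z = 0 := if_neg (not_le.mpr h)

instance : IsProbabilityMeasure (expMeasure 1) := isProbabilityMeasure_expMeasure one_pos

lemma exp_Iic (t : ℝ) : (expMeasure 1) (Iic t) = ENNReal.ofReal (G t) := by
  rw [← ofReal_cdf]
  congr 1
  have h : (cdf (expMeasure 1)) t = if 0 ≤ t then 1 - Real.exp (-(1*t)) else 0 :=
    cdf_expMeasure_eq one_pos t
  rw [h]; simp [G, one_mul]

lemma integral_expM (g : ℝ → ℝ) :
    ∫ x, g x ∂(expMeasure 1) = ∫ x, (if 0 ≤ x then Real.exp (-x) else 0) * g x := by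
  have hmeas : Measurable fun x : ℝ => ((if 0 ≤ x then Real.exp (-x) else 0 : ℝ).toNNReal) :=
    (Measurable.ite measurableSet_Ici (Real.measurable_exp.comp measurable_neg)
      measurable_const).real_toNNReal
  have hd : expMeasure 1
      = MeasureTheory.Measure.withDensity volume
          (fun x => (((if 0 ≤ x then Real.exp (-x) else 0 : ℝ).toNNReal : ℝ≥0) : ℝ≥0∞)) := by
    show Measure.withDensity volume (gammaPDF 1 1) = _
    congr 1
    funext x
    rw [show gammaPDF 1 1 x = exponentialPDF 1 x from rfl, exponentialPDF_eq]
    simp [ENNReal.ofReal, one_mul]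
  rw [hd, integral_withDensity_eq_integral_smul hmeas g]
  congr 1; funext x
  rw [NNReal.smul_def, smul_eq_mul, Real.coe_toNNReal _
    (by split_ifs; exacts [(Real.exp_pos _).le, le_rfl])]

lemma int_exp_two (a : ℝ) : ∫ x in Ioi a, Real.exp (-(2*x)) = Real.exp (-(2*a)) / 2 := by
  have h := integral_comp_mul_left_Ioi (fun y => Real.exp (-y)) a (b := 2) two_pos
  simp only [smul_eq_mul] at h
  rw [h, integral_exp_neg_Ioi]
  ring

lemma int_exp_one (a : ℝ) : IntegrableOn (fun x => Real.exp (-x)) (Ioi a) := by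
  have := exp_neg_integrableOn_Ioi a one_pos
  simpa using this

lemma int_exp_two' (a : ℝ) : IntegrableOn (fun x => Real.exp (-(2*x))) (Ioi a) := by
  have := exp_neg_integrableOn_Ioi a two_pos
  simpa [neg_mul] using this

lemma intJ_pos : (∫ x, (if 0 ≤ x then Real.exp (-x) else 0) * G (x+2))
    = 1 - Real.exp (-2) / 2 := by
  have hfun : (fun x => (if 0 ≤ x then Real.exp (-x) else 0) * G (x+2))
      = Set.indicator (Ici 0) (fun x => Real.exp (-x) - Real.exp (-2) * Real.exp (-(2*x))) := by
    funext x
    by_cases h : 0 ≤ x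
    · rw [Set.indicator_of_mem (mem_Ici.mpr h), if_pos h, G_of_nonneg (by linarith)]
      rw [mul_sub, mul_one, ← Real.exp_add, ← Real.exp_add]
      congr 2
      ring
    · rw [Set.indicator_of_notMem (by simpa using h), if_neg h, zero_mul]
  rw [hfun, integral_indicator measurableSet_Ici, integral_Ici_eq_integral_Ioi,
    integral_sub (int_exp_one 0) ((int_exp_two' 0).const_mul _),
    integral_exp_neg_Ioi, integral_const_mul, int_exp_two]
  norm_num [Real.exp_zero]
  ring

lemma intJ_neg : (∫ x, (if 0 ≤ x then Real.exp (-x) else 0) * G (x-2))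
    = Real.exp (-2) / 2 := by
  have hfun : (fun x => (if 0 ≤ x then Real.exp (-x) else 0) * G (x-2))
      = Set.indicator (Ici 2) (fun x => Real.exp (-x) - Real.exp 2 * Real.exp (-(2*x))) := by
    funext x
    by_cases h2 : (2:ℝ) ≤ x
    · rw [Set.indicator_of_mem (mem_Ici.mpr h2), if_pos (by linarith), G_of_nonneg (by linarith)]
      rw [mul_sub, mul_one, ← Real.exp_add, ← Real.exp_add]
      congr 2
      ring
    · rw [Set.indicator_of_notMem (by simpa using h2)]
      by_cases h0 : 0 ≤ x
      · rw [if_pos h0, G_of_neg (by linarith), mul_zero]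
      · rw [if_neg h0, zero_mul]
  rw [hfun, integral_indicator measurableSet_Ici, integral_Ici_eq_integral_Ioi,
    integral_sub (int_exp_one 2) ((int_exp_two' 2).const_mul _),
    integral_exp_neg_Ioi, integral_const_mul, int_exp_two]
  have hh : Real.exp 2 * Real.exp (-(2*2:ℝ)) = Real.exp (-2) := by
    rw [← Real.exp_add]; norm_num
  have h : Real.exp 2 * (Real.exp (-(2*2:ℝ)) / 2) = Real.exp (-2) / 2 := by
    rw [← hh]; ring
  rw [h]
  ring

lemma G_int (c : ℝ) : Integrable (fun b => G (b + c)) (expMeasure 1) := by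
  refine Integrable.mono' (integrable_const 1)
    ((G_meas.comp (measurable_id.add_const c)).aestronglyMeasurable) ?_
  filter_upwards with b
  rw [Real.norm_eq_abs, abs_of_nonneg (G_nonneg _)]
  exact G_le_one _

lemma G_int0 : Integrable G (expMeasure 1) := by
  have := G_int 0
  simpa using this

/-- With `X₁` Rademacher, `X₂` exponential(1) independent of `X₁`, `X̂ = (X₁ + X₂)/√2` and `Ŷ = F_X̂(X̂)`, one has `cov(X₁, Ŷ) = (1 − e⁻²)/4`. -/
theorem stmt_10 {Ω : Type*} [MeasurableSpace Ω] (μ : Measure Ω) [IsProbabilityMeasure μ]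
    (X₁ X₂ : Ω → ℝ) (h1meas : Measurable X₁) (h2meas : Measurable X₂)
    (hX1 : μ.map X₁ = (1/2 : ℝ≥0∞) • Measure.dirac 1 + (1/2 : ℝ≥0∞) • Measure.dirac (-1))
    (hX2 : μ.map X₂ = expMeasure 1)
    (hind : IndepFun X₁ X₂ μ)
    (Xhat : Ω → ℝ) (hXhat : Xhat = fun ω => (X₁ ω + X₂ ω) / Real.sqrt 2)
    (Yhat : Ω → ℝ) (hYhat : Yhat = fun ω => cdf (μ.map Xhat) (Xhat ω)) :
    (∫ ω, X₁ ω * Yhat ω ∂μ) - (∫ ω, X₁ ω ∂μ) * (∫ ω, Yhat ω ∂μ) = (1 - Real.exp (-2)) / 4 := by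
  subst hXhat
  subst hYhat
  have hs2 : (0:ℝ) < Real.sqrt 2 := Real.sqrt_pos.mpr two_pos
  have hhalf : (1/2 : ℝ≥0∞) ≠ ⊤ := (ENNReal.div_lt_top ENNReal.one_ne_top (by norm_num)).ne
  -- E[X₁] = 0
  have hEX1 : ∫ ω, X₁ ω ∂μ = 0 := by
    have h := MeasureTheory.integral_map (μ := μ) (φ := X₁) (f := fun x : ℝ => x)
      h1meas.aemeasurable aestronglyMeasurable_id
    rw [← h, hX1]
    have i1 : Integrable (fun x : ℝ => x) (Measure.dirac (1:ℝ)) :=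
      (integrable_const (1:ℝ)).congr (ae_eq_dirac (fun x : ℝ => x)).symm
    have i2 : Integrable (fun x : ℝ => x) (Measure.dirac (-1:ℝ)) :=
      (integrable_const (-1:ℝ)).congr (ae_eq_dirac (fun x : ℝ => x)).symm
    rw [integral_add_measure (i1.smul_measure hhalf) (i2.smul_measure hhalf),
      integral_smul_measure, integral_smul_measure, integral_dirac, integral_dirac]
    simp
  rw [hEX1, zero_mul, sub_zero]
  -- law of the pair
  have hmap : μ.map (fun ω => (X₁ ω, X₂ ω)) = (μ.map X₁).prod (μ.map X₂) :=
    (indepFun_iff_map_prod_eq_prod_map_map h1meas.aemeasurable h2meas.aemeasurable).mp hind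
  rw [hX1, hX2] at hmap
  haveI hfin : IsFiniteMeasure
      ((1/2 : ℝ≥0∞) • Measure.dirac (1:ℝ) + (1/2 : ℝ≥0∞) • Measure.dirac (-1:ℝ)) := by
    constructor
    rw [Measure.add_apply, Measure.smul_apply, Measure.smul_apply]
    simp
  have hprod : (((1/2:ℝ≥0∞) • Measure.dirac (1:ℝ) + (1/2:ℝ≥0∞) • Measure.dirac (-1:ℝ))).prod
        (expMeasure 1)
      = (1/2:ℝ≥0∞) • ((expMeasure 1).map (fun b => ((1:ℝ), b)))
        + (1/2:ℝ≥0∞) • ((expMeasure 1).map (fun b => ((-1:ℝ), b))) := by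
    refine Measure.prod_eq fun s t hs ht => ?_
    rw [Measure.add_apply, Measure.smul_apply, Measure.smul_apply,
      Measure.map_apply measurable_prodMk_left (hs.prod ht),
      Measure.map_apply measurable_prodMk_left (hs.prod ht),
      Measure.add_apply, Measure.smul_apply, Measure.smul_apply,
      Measure.dirac_apply' _ hs, Measure.dirac_apply' _ hs]
    by_cases h1 : (1:ℝ) ∈ s <;> by_cases h2 : (-1:ℝ) ∈ s <;>
      simp [Set.mk_preimage_prod_left_eq_if, h1, h2, Set.indicator, add_mul, mul_comm]
  rw [hprod] at hmap
  -- law of Xhat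
  have hq : Measurable (fun p : ℝ × ℝ => (p.1 + p.2) / Real.sqrt 2) :=
    (measurable_fst.add measurable_snd).div_const _
  have hlawX : μ.map (fun ω => (X₁ ω + X₂ ω) / Real.sqrt 2)
      = (1/2:ℝ≥0∞) • ((expMeasure 1).map (fun b => (1+b) / Real.sqrt 2))
        + (1/2:ℝ≥0∞) • ((expMeasure 1).map (fun b => (-1+b) / Real.sqrt 2)) := by
    rw [show (fun ω => (X₁ ω + X₂ ω) / Real.sqrt 2)
        = (fun p : ℝ × ℝ => (p.1 + p.2) / Real.sqrt 2) ∘ (fun ω => (X₁ ω, X₂ ω)) from rfl,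
      ← Measure.map_map hq (h1meas.prodMk h2meas), hmap,
      Measure.map_add _ _ hq, Measure.map_smul, Measure.map_smul,
      Measure.map_map hq measurable_prodMk_left, Measure.map_map hq measurable_prodMk_left]
    rfl
  -- cdf formula
  haveI : IsProbabilityMeasure (μ.map (fun ω => (X₁ ω + X₂ ω) / Real.sqrt 2)) :=
    Measure.isProbabilityMeasure_map ((h1meas.add h2meas).div_const _).aemeasurable
  have hmb1 : Measurable fun b : ℝ => (1 + b) / Real.sqrt 2 := by fun_prop
  have hmb2 : Measurable fun b : ℝ => (-1 + b) / Real.sqrt 2 := by fun_prop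
  have hF : ∀ x, cdf (μ.map (fun ω => (X₁ ω + X₂ ω) / Real.sqrt 2)) x
      = (G (Real.sqrt 2 * x - 1) + G (Real.sqrt 2 * x + 1)) / 2 := by
    intro x
    have hs1 : (fun b : ℝ => (1+b) / Real.sqrt 2) ⁻¹' (Iic x) = Iic (Real.sqrt 2 * x - 1) := by
      ext b
      simp only [mem_preimage, mem_Iic]
      rw [div_le_iff₀ hs2]
      constructor <;> intro h <;> nlinarith [mul_comm x (Real.sqrt 2)]
    have hs1' : (fun b : ℝ => (-1+b) / Real.sqrt 2) ⁻¹' (Iic x) = Iic (Real.sqrt 2 * x + 1) := by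
      ext b
      simp only [mem_preimage, mem_Iic]
      rw [div_le_iff₀ hs2]
      constructor <;> intro h <;> nlinarith [mul_comm x (Real.sqrt 2)]
    rw [cdf_eq_real, measureReal_def, hlawX, Measure.add_apply, Measure.smul_apply, Measure.smul_apply,
      Measure.map_apply hmb1 measurableSet_Iic,
      Measure.map_apply hmb2 measurableSet_Iic,
      hs1, hs1', exp_Iic, exp_Iic, smul_eq_mul, smul_eq_mul,
      ENNReal.toReal_add (by finiteness) (by finiteness),
      ENNReal.toReal_mul, ENNReal.toReal_mul,
      ENNReal.toReal_ofReal (G_nonneg _), ENNReal.toReal_ofReal (G_nonneg _)]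
    rw [show ((1:ℝ≥0∞)/2).toReal = (1/2 : ℝ) by simp]
    ring
  -- rewrite the integrand
  have hcancel : ∀ a : ℝ, Real.sqrt 2 * (a / Real.sqrt 2) = a := fun a => by
    rw [← mul_div_assoc, mul_div_cancel_left₀ _ (ne_of_gt hs2)]
  set H : ℝ × ℝ → ℝ := fun p => p.1 * ((G (p.1 + p.2 - 1) + G (p.1 + p.2 + 1)) / 2) with hH
  have hHmeas : Measurable H := by
    apply measurable_fst.mul
    apply Measurable.div_const
    exact ((G_meas.comp ((measurable_fst.add measurable_snd).sub_const 1)).add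
      (G_meas.comp ((measurable_fst.add measurable_snd).add_const 1)))
  have hinteq : (fun ω => X₁ ω * cdf (μ.map (fun ω => (X₁ ω + X₂ ω) / Real.sqrt 2))
      ((X₁ ω + X₂ ω) / Real.sqrt 2)) = fun ω => H (X₁ ω, X₂ ω) := by
    funext ω
    rw [hF, hcancel]
  rw [hinteq]
  -- integrability over the mapped measures
  have hint : ∀ a : ℝ, Integrable H ((expMeasure 1).map (fun b : ℝ => (a, b))) := by
    intro a
    rw [integrable_map_measure hHmeas.aestronglyMeasurable
      measurable_prodMk_left.aemeasurable]
    refine Integrable.mono' (integrable_const (|a|))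
      ((hHmeas.comp measurable_prodMk_left).aestronglyMeasurable) ?_
    filter_upwards with b
    show ‖a * ((G (a + b - 1) + G (a + b + 1)) / 2)‖ ≤ |a|
    rw [Real.norm_eq_abs, abs_mul]
    have h1 := G_nonneg (a + b - 1)
    have h2 := G_nonneg (a + b + 1)
    have h3 := G_le_one (a + b - 1)
    have h4 := G_le_one (a + b + 1)
    have : |(G (a + b - 1) + G (a + b + 1)) / 2| ≤ 1 := by
      rw [abs_of_nonneg (by linarith)]; linarith
    nlinarith [abs_nonneg a]
  -- compute the integral
  have hstep : ∫ ω, H (X₁ ω, X₂ ω) ∂μ = ∫ p, H p ∂(μ.map (fun ω => (X₁ ω, X₂ ω))) :=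
    (MeasureTheory.integral_map (h1meas.prodMk h2meas).aemeasurable
      hHmeas.aestronglyMeasurable).symm
  have hstep1 : ∫ p, H p ∂((expMeasure 1).map (fun b : ℝ => ((1:ℝ), b)))
      = ∫ b, H ((1:ℝ), b) ∂(expMeasure 1) :=
    MeasureTheory.integral_map measurable_prodMk_left.aemeasurable
      hHmeas.aestronglyMeasurable
  have hstep2 : ∫ p, H p ∂((expMeasure 1).map (fun b : ℝ => ((-1:ℝ), b)))
      = ∫ b, H ((-1:ℝ), b) ∂(expMeasure 1) :=
    MeasureTheory.integral_map measurable_prodMk_left.aemeasurable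
      hHmeas.aestronglyMeasurable
  rw [hstep, hmap,
    integral_add_measure ((hint 1).smul_measure hhalf) ((hint (-1)).smul_measure hhalf),
    integral_smul_measure, integral_smul_measure, hstep1, hstep2]
  have e1 : (fun b : ℝ => H ((1:ℝ), b)) = fun b => (G b + G (b + 2)) / 2 := by
    funext b
    show (1:ℝ) * ((G (1 + b - 1) + G (1 + b + 1)) / 2) = _
    rw [show (1:ℝ) + b - 1 = b by ring, show (1:ℝ) + b + 1 = b + 2 by ring]
    ring
  have e2 : (fun b : ℝ => H ((-1:ℝ), b)) = fun b => -((G (b - 2) + G b) / 2) := by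
    funext b
    show (-1:ℝ) * ((G (-1 + b - 1) + G (-1 + b + 1)) / 2) = _
    rw [show (-1:ℝ) + b - 1 = b - 2 by ring, show (-1:ℝ) + b + 1 = b by ring]
    ring
  rw [e1, e2]
  have i2 : ∫ b, G (b + 2) ∂(expMeasure 1) = 1 - Real.exp (-2) / 2 := by
    rw [integral_expM]
    exact intJ_pos
  have im2 : ∫ b, G (b - 2) ∂(expMeasure 1) = Real.exp (-2) / 2 := by
    rw [integral_expM]
    have : (fun x => (if 0 ≤ x then Real.exp (-x) else 0) * G (x - 2))
        = fun x => (if 0 ≤ x then Real.exp (-x) else 0) * G (x - 2) := rfl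
    exact intJ_neg
  have hsplit1 : ∫ b, (G b + G (b + 2)) / 2 ∂(expMeasure 1)
      = ((∫ b, G b ∂(expMeasure 1)) + (1 - Real.exp (-2) / 2)) / 2 := by
    rw [← i2, ← integral_add G_int0 (G_int 2), ← integral_div]
  have hsplit2 : ∫ b, -((G (b - 2) + G b) / 2) ∂(expMeasure 1)
      = -((Real.exp (-2) / 2 + (∫ b, G b ∂(expMeasure 1))) / 2) := by
    have hgm2 : Integrable (fun b => G (b - 2)) (expMeasure 1) := by
      have := G_int (-2)
      simpa [sub_eq_add_neg] using this
    rw [← im2, ← integral_add hgm2 G_int0, ← integral_div, ← integral_neg]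
  rw [hsplit1, hsplit2]
  rw [show ((1:ℝ≥0∞)/2).toReal = (1/2 : ℝ) by simp]
  simp only [smul_eq_mul]
  ring
end

section
/- Let Z and W be real-valued random variables defined on a common probability space whose cumulative distribution functions F_Z and F_W are continuous. Then E[F_Z(Z)·F_W(W)] ≤ 1/3, and equality holds if F_W(W) = F_Z(Z) almost surely. -/
open MeasureTheory ProbabilityTheory

/-!
By the probability integral transform, `U = F_Z(Z)` and `V = F_W(W)` are uniform on `[0, 1]`,
so `E[U²] = E[V²] = ∫₀¹ u² du = 1/3`. Then `UV ≤ (U² + V²)/2` gives the bound, with equality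
when `U = V`.
-/

section CDF

open Set Filter

lemma Monotone.exists_preimage_Iic_eq_Iic {f : ℝ → ℝ} (hm : Monotone f) (hc : Continuous f)
    {t : ℝ} (hne : (f ⁻¹' Iic t).Nonempty) (hbdd : BddAbove (f ⁻¹' Iic t)) :
    ∃ b, f b = t ∧ f ⁻¹' Iic t = Iic b := by
  set b := sSup (f ⁻¹' Iic t)
  have hb : f b ≤ t := (isClosed_Iic.preimage hc).csSup_mem hne hbdd
  refine ⟨b, le_antisymm hb ?_, ?_⟩
  · -- points to the right of `b` lie outside the set, so `f b ≥ t` by right continuity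
    refine _root_.ge_of_tendsto (hc.continuousWithinAt (s := Ioi b)) ?_
    filter_upwards [self_mem_nhdsWithin] with x hx
    exact (not_le.mp fun h => (not_le.mpr hx) (le_csSup hbdd h)).le
  · exact Subset.antisymm (fun x hx => le_csSup hbdd hx) fun x hx => (hm hx).trans hb

variable (ν : Measure ℝ) [IsProbabilityMeasure ν]

lemma measure_cdf_preimage_Iic (hc : Continuous (cdf ν)) {t : ℝ} (ht0 : 0 ≤ t) (ht1 : t < 1) :
    ν (cdf ν ⁻¹' Iic t) = ENNReal.ofReal t := by
  rcases (cdf ν ⁻¹' Iic t).eq_empty_or_nonempty with hempty | hne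
  · have : t ≤ 0 := ge_of_tendsto' (tendsto_cdf_atBot ν) fun x =>
      (not_le.mp (eq_empty_iff_forall_notMem.mp hempty x)).le
    rw [hempty, measure_empty, le_antisymm this ht0, ENNReal.ofReal_zero]
  · obtain ⟨x₀, hx₀⟩ :=
      eventually_atTop.mp ((tendsto_cdf_atTop ν).eventually (eventually_gt_nhds ht1))
    have hbdd : BddAbove (cdf ν ⁻¹' Iic t) :=
      ⟨x₀, fun x hx => not_lt.mp fun h => (not_le.mpr (hx₀ x h.le)) hx⟩
    obtain ⟨b, hb, hpre⟩ := (monotone_cdf ν).exists_preimage_Iic_eq_Iic hc hne hbdd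
    rw [hpre, ← ofReal_cdf, hb]

lemma map_cdf_eq_restrict_Icc (hc : Continuous (cdf ν)) :
    ν.map (cdf ν) = volume.restrict (Icc 0 1) := by
  refine Measure.ext_of_Iic _ _ fun t => ?_
  have hIcc : Iic t ∩ Icc 0 1 = Icc 0 (min t 1) := by
    ext; simp only [mem_inter_iff, mem_Iic, mem_Icc, le_min_iff]; tauto
  rw [Measure.map_apply hc.measurable measurableSet_Iic, Measure.restrict_apply measurableSet_Iic,
    hIcc, Real.volume_Icc, sub_zero]
  rcases lt_or_ge t 0 with ht0 | ht0
  · have : cdf ν ⁻¹' Iic t = ∅ := eq_empty_of_forall_notMem fun x hx =>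
      (ht0.trans_le (cdf_nonneg ν x)).not_ge hx
    rw [this, measure_empty, ENNReal.ofReal_of_nonpos (by grind)]
  rcases lt_or_ge t 1 with ht1 | ht1
  · rw [measure_cdf_preimage_Iic ν hc ht0 ht1, min_eq_left ht1.le]
  · have : cdf ν ⁻¹' Iic t = univ := eq_univ_of_forall fun x => (cdf_le_one ν x).trans ht1
    rw [this, min_eq_right ht1, measure_univ, ENNReal.ofReal_one]

lemma integral_cdf_sq (hc : Continuous (cdf ν)) : ∫ x, cdf ν x ^ 2 ∂ν = 1 / 3 := by
  rw [← integral_map (f := fun y => y ^ 2) hc.aemeasurable (by fun_prop),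
    map_cdf_eq_restrict_Icc ν hc, integral_Icc_eq_integral_Ioc,
    ← intervalIntegral.integral_of_le zero_le_one, integral_pow]
  norm_num

variable {Ω : Type*} [MeasurableSpace Ω] (μ : Measure Ω) [IsProbabilityMeasure μ]

lemma integral_cdf_map_comp_sq {X : Ω → ℝ} (hX : Measurable X)
    (hc : Continuous (cdf (μ.map X))) :
    ∫ ω, cdf (μ.map X) (X ω) ^ 2 ∂μ = 1 / 3 := by
  have := Measure.isProbabilityMeasure_map (μ := μ) hX.aemeasurable
  rw [← integral_cdf_sq _ hc,
    integral_map (f := fun y => cdf (μ.map X) y ^ 2) hX.aemeasurable (by fun_prop)]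

lemma integrable_cdf_map_comp_mul {X Y : Ω → ℝ} (hX : Measurable X) (hY : Measurable Y) :
    Integrable (fun ω => cdf (μ.map X) (X ω) * cdf (μ.map Y) (Y ω)) μ := by
  refine .of_bound ((((monotone_cdf _).measurable.comp hX).mul
    ((monotone_cdf _).measurable.comp hY)).aestronglyMeasurable) 1 (ae_of_all _ fun ω => ?_)
  rw [norm_mul]
  have hunit (ρ : Measure ℝ) (x : ℝ) : ‖cdf ρ x‖ ≤ 1 := by
    rw [Real.norm_of_nonneg (cdf_nonneg _ _)]; exact cdf_le_one _ _
  exact mul_le_one₀ (hunit _ _) (norm_nonneg _) (hunit _ _)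

end CDF

/-- If `Z, W` are real random variables on a common probability space with continuous
cumulative distribution functions, then `E[F_Z(Z)·F_W(W)] ≤ 1/3`, with equality if
`F_W(W) = F_Z(Z)` almost surely. -/
theorem stmt_16 {Ω : Type*} [MeasurableSpace Ω] (μ : Measure Ω) [IsProbabilityMeasure μ]
    (Z W : Ω → ℝ) (hZmeas : Measurable Z) (hWmeas : Measurable W)
    (hZcont : Continuous (cdf (μ.map Z))) (hWcont : Continuous (cdf (μ.map W))) :
    ∫ ω, cdf (μ.map Z) (Z ω) * cdf (μ.map W) (W ω) ∂μ ≤ 1 / 3 ∧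
    ((∀ᵐ ω ∂μ, cdf (μ.map W) (W ω) = cdf (μ.map Z) (Z ω)) →
      ∫ ω, cdf (μ.map Z) (Z ω) * cdf (μ.map W) (W ω) ∂μ = 1 / 3) := by
  set U := fun ω => cdf (μ.map Z) (Z ω)
  set V := fun ω => cdf (μ.map W) (W ω)
  have hU : ∫ ω, U ω ^ 2 ∂μ = 1 / 3 := integral_cdf_map_comp_sq μ hZmeas hZcont
  have hV : ∫ ω, V ω ^ 2 ∂μ = 1 / 3 := integral_cdf_map_comp_sq μ hWmeas hWcont
  have hU2 : Integrable (fun ω => U ω ^ 2) μ := by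
    simpa only [sq] using integrable_cdf_map_comp_mul μ hZmeas hZmeas
  have hV2 : Integrable (fun ω => V ω ^ 2) μ := by
    simpa only [sq] using integrable_cdf_map_comp_mul μ hWmeas hWmeas
  refine ⟨?_, fun hVU => ?_⟩
  · calc ∫ ω, U ω * V ω ∂μ ≤ ∫ ω, (U ω ^ 2 + V ω ^ 2) / 2 ∂μ :=
          integral_mono (integrable_cdf_map_comp_mul μ hZmeas hWmeas) ((hU2.add hV2).div_const 2)
            fun ω => by linarith [two_mul_le_add_sq (U ω) (V ω)]
      _ = 1 / 3 := by rw [integral_div, integral_add hU2 hV2, hU, hV]; norm_num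
  · calc ∫ ω, U ω * V ω ∂μ = ∫ ω, U ω ^ 2 ∂μ :=
          integral_congr_ae (hVU.mono fun ω h => (congrArg (U ω * ·) h).trans (sq (U ω)).symm)
      _ = 1 / 3 := hU
end

section
/- Let (X, Y) be a centered square-integrable pair of random vectors with X valued in ℝ^{d_x} and Y valued in ℝ^{d_y}, d_y ≥ 2, and set Σ_X = E[XXᵀ], Σ_Y = E[YYᵀ], Σ_{XY} = E[XYᵀ]. Write Y = (Y₁, Y₋₁) with Y₁ the first coordinate. Suppose (α°, γ°) ∈ ℝ^{d_x} × ℝ^{d_y − 1} minimizes E[(Y₁ − αᵀX + γᵀY₋₁)²] over all (α, γ), and set β° = (1, γ°ᵀ)ᵀ ∈ ℝ^{d_y}, A = α°ᵀΣ_X α°, B = β°ᵀΣ_Y β°. Then (α°, β°) solves the program max αᵀΣ_{XY}β over all (α, β) ∈ ℝ^{d_x} × ℝ^{d_y} subject to αᵀΣ_X α = A, βᵀΣ_Y β = B, and β₁ = 1; that is, every such (α, β) satisfies αᵀΣ_{XY}β ≤ α°ᵀΣ_{XY}β°. -/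
/-!
Writing `β = (1, γ)`, the OLS residual is `βᵀY − αᵀX`, so the OLS objective equals
`βᵀΣ_Yβ − 2 αᵀΣ_{XY}β + αᵀΣ_Xα`. On the constraint set the two quadratic terms are fixed
at their values at `(α°, β°)`, so minimizing the objective is the same as maximizing `αᵀΣ_{XY}β`.
-/

open MeasureTheory Matrix
open scoped ENNReal

section SecondMoments

variable {Ω ι κ : Type*} [MeasurableSpace Ω] {μ : Measure Ω} [Fintype ι] [Fintype κ]

lemma memLp_dotProduct {p : ℝ≥0∞} (v : ι → ℝ) {Z : Ω → ι → ℝ}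
    (hZ : ∀ i, MemLp (fun ω => Z ω i) p μ) : MemLp (fun ω => v ⬝ᵥ Z ω) p μ := by
  simpa only [dotProduct] using memLp_finsetSum _ fun i _ => (hZ i).const_mul (v i)

lemma integral_dotProduct_mul_dotProduct {Z : Ω → ι → ℝ} {W : Ω → κ → ℝ}
    (hZ : ∀ i, MemLp (fun ω => Z ω i) 2 μ) (hW : ∀ j, MemLp (fun ω => W ω j) 2 μ)
    {M : Matrix ι κ ℝ} (hM : ∀ i j, M i j = ∫ ω, Z ω i * W ω j ∂μ) (v : ι → ℝ) (w : κ → ℝ) :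
    ∫ ω, (v ⬝ᵥ Z ω) * (w ⬝ᵥ W ω) ∂μ = v ⬝ᵥ M *ᵥ w := by
  have hint : ∀ i j, Integrable (fun ω => v i * (Z ω i * W ω j) * w j) μ := fun i j =>
    (((hZ i).integrable_mul (hW j)).const_mul (v i)).mul_const (w j)
  have hexpand : ∀ ω, (v ⬝ᵥ Z ω) * (w ⬝ᵥ W ω) = ∑ i, ∑ j, v i * (Z ω i * W ω j) * w j :=
    fun ω => by
      simp only [dotProduct, Finset.sum_mul_sum]
      exact Finset.sum_congr rfl fun i _ => Finset.sum_congr rfl fun j _ => by ring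
  calc ∫ ω, (v ⬝ᵥ Z ω) * (w ⬝ᵥ W ω) ∂μ
      = ∑ i, ∑ j, v i * (∫ ω, Z ω i * W ω j ∂μ) * w j := by
        rw [integral_congr_ae (ae_of_all _ hexpand),
          integral_finsetSum _ fun i _ => integrable_finsetSum _ fun j _ => hint i j]
        refine Finset.sum_congr rfl fun i _ => ?_
        rw [integral_finsetSum _ fun j _ => hint i j]
        exact Finset.sum_congr rfl fun j _ => by rw [integral_mul_const, integral_const_mul]
    _ = v ⬝ᵥ M *ᵥ w := by simp only [dotProduct, mulVec, hM, Finset.mul_sum, mul_assoc]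

lemma integral_sq_dotProduct_sub_dotProduct {X : Ω → ι → ℝ} {Y : Ω → κ → ℝ}
    (hX : ∀ i, MemLp (fun ω => X ω i) 2 μ) (hY : ∀ j, MemLp (fun ω => Y ω j) 2 μ)
    {SX : Matrix ι ι ℝ} (hSX : ∀ i j, SX i j = ∫ ω, X ω i * X ω j ∂μ)
    {SY : Matrix κ κ ℝ} (hSY : ∀ i j, SY i j = ∫ ω, Y ω i * Y ω j ∂μ)
    {SXY : Matrix ι κ ℝ} (hSXY : ∀ i j, SXY i j = ∫ ω, X ω i * Y ω j ∂μ)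
    (a : ι → ℝ) (b : κ → ℝ) :
    ∫ ω, (b ⬝ᵥ Y ω - a ⬝ᵥ X ω) ^ 2 ∂μ = b ⬝ᵥ SY *ᵥ b - 2 * (a ⬝ᵥ SXY *ᵥ b) + a ⬝ᵥ SX *ᵥ a := by
  have hbY := memLp_dotProduct b hY
  have haX := memLp_dotProduct a hX
  have hYY : Integrable (fun ω => (b ⬝ᵥ Y ω) * (b ⬝ᵥ Y ω)) μ := hbY.integrable_mul hbY
  have hXY : Integrable (fun ω => 2 * ((a ⬝ᵥ X ω) * (b ⬝ᵥ Y ω))) μ :=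
    (haX.integrable_mul hbY).const_mul 2
  have hXX : Integrable (fun ω => (a ⬝ᵥ X ω) * (a ⬝ᵥ X ω)) μ := haX.integrable_mul haX
  have hYYXY : Integrable
      (fun ω => (b ⬝ᵥ Y ω) * (b ⬝ᵥ Y ω) - 2 * ((a ⬝ᵥ X ω) * (b ⬝ᵥ Y ω))) μ := hYY.sub hXY
  calc ∫ ω, (b ⬝ᵥ Y ω - a ⬝ᵥ X ω) ^ 2 ∂μ
      = ∫ ω, ((b ⬝ᵥ Y ω) * (b ⬝ᵥ Y ω) - 2 * ((a ⬝ᵥ X ω) * (b ⬝ᵥ Y ω))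
          + (a ⬝ᵥ X ω) * (a ⬝ᵥ X ω)) ∂μ := by
        congr 1 with ω
        ring
    _ = b ⬝ᵥ SY *ᵥ b - 2 * (a ⬝ᵥ SXY *ᵥ b) + a ⬝ᵥ SX *ᵥ a := by
        rw [integral_add hYYXY hXX, integral_sub hYY hXY, integral_const_mul,
          integral_dotProduct_mul_dotProduct hY hY hSY,
          integral_dotProduct_mul_dotProduct hX hY hSXY,
          integral_dotProduct_mul_dotProduct hX hX hSX]

end SecondMoments

lemma cons_one_dotProduct {m : ℕ} (g : Fin m → ℝ) (y : Fin (m + 1) → ℝ) :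
    (Fin.cons 1 g : Fin (m + 1) → ℝ) ⬝ᵥ y = y 0 + g ⬝ᵥ (fun i => y i.succ) := by
  simp only [dotProduct, Fin.sum_univ_succ, Fin.cons_zero, Fin.cons_succ, one_mul]

theorem stmt_18_general {Ω : Type*} [MeasurableSpace Ω] (μ : Measure Ω)
    {dx m : ℕ}
    (X : Ω → (Fin dx → ℝ)) (Y : Ω → (Fin (m + 1) → ℝ))
    (hXsq : ∀ i, MemLp (fun ω => X ω i) 2 μ) (hYsq : ∀ j, MemLp (fun ω => Y ω j) 2 μ)
    (SX : Matrix (Fin dx) (Fin dx) ℝ) (hSX : ∀ i j, SX i j = ∫ ω, X ω i * X ω j ∂μ)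
    (SY : Matrix (Fin (m + 1)) (Fin (m + 1)) ℝ)
    (hSY : ∀ i j, SY i j = ∫ ω, Y ω i * Y ω j ∂μ)
    (SXY : Matrix (Fin dx) (Fin (m + 1)) ℝ)
    (hSXY : ∀ i j, SXY i j = ∫ ω, X ω i * Y ω j ∂μ)
    (αo : Fin dx → ℝ) (γo : Fin m → ℝ)
    (hmin : ∀ (a : Fin dx → ℝ) (g : Fin m → ℝ),
      ∫ ω, (Y ω 0 - αo ⬝ᵥ X ω + γo ⬝ᵥ (fun i => Y ω i.succ)) ^ 2 ∂μ ≤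
        ∫ ω, (Y ω 0 - a ⬝ᵥ X ω + g ⬝ᵥ (fun i => Y ω i.succ)) ^ 2 ∂μ)
    (βo : Fin (m + 1) → ℝ) (hβo : βo = Fin.cons 1 γo) :
    ∀ (α : Fin dx → ℝ) (β : Fin (m + 1) → ℝ),
      α ⬝ᵥ SX *ᵥ α = αo ⬝ᵥ SX *ᵥ αo →
      β ⬝ᵥ SY *ᵥ β = βo ⬝ᵥ SY *ᵥ βo →
      β 0 = 1 →
      α ⬝ᵥ SXY *ᵥ β ≤ αo ⬝ᵥ SXY *ᵥ βo := by
  have objective : ∀ (a : Fin dx → ℝ) (g : Fin m → ℝ),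
      ∫ ω, (Y ω 0 - a ⬝ᵥ X ω + g ⬝ᵥ (fun i => Y ω i.succ)) ^ 2 ∂μ
        = (Fin.cons 1 g : Fin (m + 1) → ℝ) ⬝ᵥ SY *ᵥ Fin.cons 1 g
          - 2 * (a ⬝ᵥ SXY *ᵥ Fin.cons 1 g) + a ⬝ᵥ SX *ᵥ a := fun a g => by
    rw [← integral_sq_dotProduct_sub_dotProduct hXsq hYsq hSX hSY hSXY]
    congr 1 with ω
    rw [cons_one_dotProduct]
    ring
  intro α β hA hB hβ0
  have hβ : β = Fin.cons 1 (Fin.tail β) := hβ0 ▸ (Fin.cons_self_tail β).symm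
  have hle := hmin α (Fin.tail β)
  rw [objective, objective, ← hβo, ← hβ] at hle
  linarith

/-- OLS as constrained canonical correlation: for a centered square-integrable pair of
random vectors `(X, Y)` with `Y` of dimension `d_y = m + 1 ≥ 2`, write `Y = (Y₁, Y₋₁)`.
If `(α°, γ°)` minimizes the OLS objective `E[(Y₁ − αᵀX + γᵀY₋₁)²]` and
`β° = (1, γ°ᵀ)ᵀ`, then `(α°, β°)` maximizes `αᵀΣ_{XY}β` subject to
`αᵀΣ_Xα = α°ᵀΣ_Xα°`, `βᵀΣ_Yβ = β°ᵀΣ_Yβ°` and `β₁ = 1`. -/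
theorem stmt_18 {Ω : Type*} [MeasurableSpace Ω] (μ : Measure Ω) [IsProbabilityMeasure μ]
    {dx m : ℕ} (hm : 1 ≤ m)
    (X : Ω → (Fin dx → ℝ)) (Y : Ω → (Fin (m + 1) → ℝ))
    (hXmeas : Measurable X) (hYmeas : Measurable Y)
    (hXsq : ∀ i, MemLp (fun ω => X ω i) 2 μ) (hYsq : ∀ j, MemLp (fun ω => Y ω j) 2 μ)
    (hXcent : ∀ i, ∫ ω, X ω i ∂μ = 0) (hYcent : ∀ j, ∫ ω, Y ω j ∂μ = 0)
    (SX : Matrix (Fin dx) (Fin dx) ℝ) (hSX : ∀ i j, SX i j = ∫ ω, X ω i * X ω j ∂μ)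
    (SY : Matrix (Fin (m + 1)) (Fin (m + 1)) ℝ)
    (hSY : ∀ i j, SY i j = ∫ ω, Y ω i * Y ω j ∂μ)
    (SXY : Matrix (Fin dx) (Fin (m + 1)) ℝ)
    (hSXY : ∀ i j, SXY i j = ∫ ω, X ω i * Y ω j ∂μ)
    (αo : Fin dx → ℝ) (γo : Fin m → ℝ)
    (hmin : ∀ (a : Fin dx → ℝ) (g : Fin m → ℝ),
      ∫ ω, (Y ω 0 - αo ⬝ᵥ X ω + γo ⬝ᵥ (fun i => Y ω i.succ)) ^ 2 ∂μ ≤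
        ∫ ω, (Y ω 0 - a ⬝ᵥ X ω + g ⬝ᵥ (fun i => Y ω i.succ)) ^ 2 ∂μ)
    (βo : Fin (m + 1) → ℝ) (hβo : βo = Fin.cons 1 γo) :
    ∀ (α : Fin dx → ℝ) (β : Fin (m + 1) → ℝ),
      α ⬝ᵥ SX *ᵥ α = αo ⬝ᵥ SX *ᵥ αo →
      β ⬝ᵥ SY *ᵥ β = βo ⬝ᵥ SY *ᵥ βo →
      β 0 = 1 →
      α ⬝ᵥ SXY *ᵥ β ≤ αo ⬝ᵥ SXY *ᵥ βo :=
  stmt_18_general μ X Y hXsq hYsq SX hSX SY hSY SXY hSXY αo γo hmin βo hβo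
end
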